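/- arXiv:2405.20547 — 3 statements merged into one kernel-verified Lean document; each statement's English description precedes it below -/
import Mathlib

section
/- Let $\mathcal{F}$ be a family of subsets of an $n$-element set such that $\pi_{\mathcal{F}}(z) \leq c z^d$ for all $z$, and suppose $\mathcal{F}$ is $\delta$-separated, i.e., $|A \triangle B| \geq \delta$ for all distinct $A, B \in \mathcal{F}$. Then $|\mathcal{F}| \leq c_1 (n/\delta)^d$ for a constant $c_1$ depending only on $c$ and $d$. -/
/-!
Haussler's packing lemma, by Chazelle's double counting. Let `d₀` bound the VC dimension of `F`:
a shattered `z`-set forces `2 ^ z ≤ c z ^ d`.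

The unit-distance graph of a family `𝒜` (members at Hamming distance one) has at most
`vcDim 𝒜 * #𝒜` edges. Split on a point `a`: the members containing `a`, with `a` removed, and
those avoiding `a` form families `ℳ` and `𝒩`. The edges in direction `a` are counted by `ℳ ∩ 𝒩`,
whose VC dimension is smaller, and the remaining ones by `ℳ ∪ 𝒩` and `ℳ ∩ 𝒩`, by induction.

Fix `S` with `#S = r + 1` and weight each trace `A ∩ S` by its multiplicity. Peeling off
superlevel sets, the sum over edges of the smaller endpoint weight is at most `2 d₀ #F`. On the
other hand, for `a ∈ S` the members of `F` with a common trace on `S \ {a}` are pairwise `δ`-apart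
outside `S \ {a}`, so a class of size `m` contributes at least `δ (m - 1) / 2` to the weights in
the directions outside `S \ {a}`. Averaging over all `S` gives
`δ (r + 1) (#F - c r ^ d) ≤ 4 d₀ (n - r) #F`, and `r ≈ 8 d₀ n / δ` yields `#F ≤ 2 c r ^ d`.
-/

open Finset
open scoped symmDiff

namespace Finset

variable {α : Type*} [DecidableEq α] {𝒜 ℬ : Finset (Finset α)} {s : Finset α} {a : α}

lemma eq_insert_of_card_symmDiff_eq_one {t : Finset α} (h : #(s ∆ t) = 1) (has : a ∈ s)
    (hat : a ∉ t) : s = insert a t := by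
  obtain ⟨b, hb⟩ := card_eq_one.1 h
  have hab : a = b := mem_singleton.1 (hb ▸ mem_symmDiff.2 (Or.inl ⟨has, hat⟩))
  ext x
  have hx := congrArg (x ∈ ·) hb
  simp only [mem_symmDiff, mem_singleton, eq_iff_iff] at hx
  simp only [mem_insert]
  grind

lemma erase_symmDiff_erase (s t : Finset α) (a : α) : s.erase a ∆ t.erase a = (s ∆ t).erase a := by
  ext x
  simp only [mem_symmDiff, mem_erase]
  tauto

lemma insert_symmDiff_self (ha : a ∉ s) : insert a s ∆ s = {a} := by
  ext x
  simp only [mem_symmDiff, mem_insert, mem_singleton]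
  grind

lemma card_sub_card_image_eq_sum {β γ : Type*} [DecidableEq γ] (s : Finset β) (f : β → γ) :
    #s - #(s.image f) = ∑ t ∈ s.image f, (#{x ∈ s | f x = t} - 1) := by
  rw [sum_tsub_distrib, ← card_eq_sum_card_image, card_eq_sum_ones (s.image f)]
  intro t ht
  obtain ⟨x, hx, rfl⟩ := mem_image.1 ht
  exact card_pos.2 ⟨x, mem_filter.2 ⟨hx, rfl⟩⟩

section
variable {A B S t : Finset α}

lemma symmDiff_subset_compl_of_inter_eq [Fintype α] (h : A ∩ S = B ∩ S) : A ∆ B ⊆ Sᶜ := by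
  intro x hx
  rw [mem_compl]
  intro hxS
  have := congrArg (x ∈ ·) h
  simp only [mem_inter, hxS, and_true, eq_iff_iff] at this
  rw [mem_symmDiff] at hx
  tauto

lemma inter_insert_eq_insert_iff (haS : a ∉ S) (htS : t ⊆ S) :
    A ∩ insert a S = insert a t ↔ A ∩ S = t ∧ a ∈ A := by
  by_cases haA : a ∈ A
  · rw [inter_insert_of_mem haA]
    refine ⟨fun h ↦ ⟨?_, haA⟩, fun h ↦ by rw [h.1]⟩
    rw [← erase_insert (fun h ↦ haS (mem_inter.1 h).2), h, erase_insert (fun h ↦ haS (htS h))]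
  · rw [inter_insert_of_notMem haA]
    simp only [haA, and_false, iff_false]
    exact fun h ↦ haS (mem_inter.1 (h ▸ mem_insert_self a t)).2

lemma inter_insert_eq_iff (haS : a ∉ S) (htS : t ⊆ S) : A ∩ insert a S = t ↔ A ∩ S = t ∧ a ∉ A := by
  by_cases haA : a ∈ A
  · rw [inter_insert_of_mem haA]
    simp only [haA, not_true_eq_false, and_false, iff_false]
    exact fun h ↦ haS (htS (h ▸ mem_insert_self a _))
  · rw [inter_insert_of_notMem haA]
    simp [haA]

end

lemma vcDim_le_vcDim_of_shatters (h : ∀ s, ℬ.Shatters s → 𝒜.Shatters s) : ℬ.vcDim ≤ 𝒜.vcDim :=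
  sup_mono fun s hs ↦ mem_shatterer.2 (h s (mem_shatterer.1 hs))

lemma exists_shatters_card_eq_vcDim (h𝒜 : 𝒜.Nonempty) : ∃ s, 𝒜.Shatters s ∧ #s = 𝒜.vcDim := by
  obtain ⟨s, hs, hcard⟩ := exists_mem_eq_sup _ ⟨∅, mem_shatterer.2 (shatters_empty.2 h𝒜)⟩ card
  exact ⟨s, mem_shatterer.1 hs, hcard.symm⟩

lemma vcDim_image_erase_le (a : α) (𝒜 : Finset (Finset α)) :
    (𝒜.image (erase · a)).vcDim ≤ 𝒜.vcDim := by
  refine vcDim_le_vcDim_of_shatters fun s hs t ht ↦ ?_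
  have has : a ∉ s := by
    obtain ⟨u, hu, hsu⟩ := hs.exists_superset
    obtain ⟨v, -, rfl⟩ := mem_image.1 hu
    exact fun h ↦ notMem_erase a v (hsu h)
  obtain ⟨u, hu, rfl⟩ := hs ht
  obtain ⟨v, hv, rfl⟩ := mem_image.1 hu
  exact ⟨v, hv, by rw [inter_erase, erase_eq_of_notMem fun h ↦ has (mem_inter.1 h).1]⟩

lemma Shatters.insert_of_memberSubfamily_inter
    (hs : (𝒜.memberSubfamily a ∩ 𝒜.nonMemberSubfamily a).Shatters s) :
    𝒜.Shatters (insert a s) := by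
  intro t ht
  rw [subset_insert_iff] at ht
  obtain ⟨u, hu, hsu⟩ := hs ht
  simp only [mem_inter, mem_memberSubfamily, mem_nonMemberSubfamily] at hu
  by_cases hat : a ∈ t
  · exact ⟨insert a u, hu.1.1, by rw [← insert_inter_distrib, hsu, insert_erase hat]⟩
  · exact ⟨u, hu.2.1, by rwa [insert_inter_of_notMem hu.2.2, hsu, erase_eq_self]⟩

lemma vcDim_memberSubfamily_inter_add_one_le
    (h : (𝒜.memberSubfamily a ∩ 𝒜.nonMemberSubfamily a).Nonempty) :
    (𝒜.memberSubfamily a ∩ 𝒜.nonMemberSubfamily a).vcDim + 1 ≤ 𝒜.vcDim := by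
  obtain ⟨s, hs, hcard⟩ := exists_shatters_card_eq_vcDim h
  have has : a ∉ s := by
    obtain ⟨u, hu, hsu⟩ := hs.exists_superset
    exact fun h ↦ (mem_memberSubfamily.1 (mem_inter.1 hu).1).2 (hsu h)
  rw [← hcard, ← card_insert_of_notMem has]
  exact hs.insert_of_memberSubfamily_inter.card_le_vcDim

lemma vcDim_le_of_card_image_inter_le {F : Finset (Finset α)} {c d d₀ : ℕ}
    (hπ : ∀ V : Finset α, 1 ≤ #V → #(F.image (· ∩ V)) ≤ c * #V ^ d)
    (hd₀ : ∀ z : ℕ, 2 ^ z ≤ c * z ^ d → z ≤ d₀) : F.vcDim ≤ d₀ := by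
  refine Finset.sup_le fun s hs ↦ ?_
  rcases s.eq_empty_or_nonempty with rfl | hs₀
  · exact Nat.zero_le _
  refine hd₀ _ ?_
  calc 2 ^ #s = #s.powerset := (card_powerset s).symm
    _ = #(F.image (· ∩ s)) := by
        simp_rw [← shatters_iff.1 (mem_shatterer.1 hs), inter_comm s]
    _ ≤ c * #s ^ d := hπ s hs₀.card_pos

def unitPairs (𝒜 : Finset (Finset α)) : Finset (Finset α × Finset α) :=
  {p ∈ 𝒜 ×ˢ 𝒜 | #(p.1 ∆ p.2) = 1}

lemma mem_unitPairs {p : Finset α × Finset α} :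
    p ∈ unitPairs 𝒜 ↔ p.1 ∈ 𝒜 ∧ p.2 ∈ 𝒜 ∧ #(p.1 ∆ p.2) = 1 := by
  simp [unitPairs, and_assoc]

lemma unitPairs_filter (P : Finset α → Prop) [DecidablePred P] :
    unitPairs {s ∈ 𝒜 | P s} = {p ∈ unitPairs 𝒜 | P p.1 ∧ P p.2} := by
  ext p
  simp only [mem_unitPairs, mem_filter]
  tauto

lemma card_unitPairs_add_card_unitPairs_le :
    #(unitPairs 𝒜) + #(unitPairs ℬ) ≤ #(unitPairs (𝒜 ∪ ℬ)) + #(unitPairs (𝒜 ∩ ℬ)) := by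
  rw [← card_union_add_card_inter]
  gcongr <;> intro p <;> simp only [mem_union, mem_inter, mem_unitPairs] <;> tauto

lemma unitPairs_subset_subfamilies (a : α) :
    unitPairs 𝒜 ⊆ unitPairs (𝒜.nonMemberSubfamily a) ∪
      (unitPairs (𝒜.memberSubfamily a)).image (Prod.map (insert a) (insert a)) ∪
      (𝒜.memberSubfamily a ∩ 𝒜.nonMemberSubfamily a).image (fun s ↦ (insert a s, s)) ∪
      (𝒜.memberSubfamily a ∩ 𝒜.nonMemberSubfamily a).image (fun s ↦ (s, insert a s)) := by
  rintro ⟨s, t⟩ hst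
  simp only [mem_unitPairs] at hst
  obtain ⟨hs, ht, hst⟩ := hst
  simp only [mem_union, mem_unitPairs, mem_image, mem_inter, mem_memberSubfamily,
    mem_nonMemberSubfamily, Prod.exists, Prod.map, Prod.mk.injEq]
  by_cases has : a ∈ s <;> by_cases hat : a ∈ t
  · have hst' : #(s.erase a ∆ t.erase a) = 1 := by
      rwa [erase_symmDiff_erase, erase_eq_of_notMem]
      simp [mem_symmDiff, has, hat]
    refine Or.inl (Or.inl (Or.inr ⟨s.erase a, t.erase a, ?_, insert_erase has, insert_erase hat⟩))
    rw [insert_erase has, insert_erase hat]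
    exact ⟨⟨hs, notMem_erase _ _⟩, ⟨ht, notMem_erase _ _⟩, hst'⟩
  · obtain rfl := eq_insert_of_card_symmDiff_eq_one hst has hat
    exact Or.inl (Or.inr ⟨t, ⟨⟨hs, hat⟩, ht, hat⟩, rfl, rfl⟩)
  · rw [symmDiff_comm] at hst
    obtain rfl := eq_insert_of_card_symmDiff_eq_one hst hat has
    exact Or.inr ⟨s, ⟨⟨ht, has⟩, hs, has⟩, rfl, rfl⟩
  · exact Or.inl (Or.inl (Or.inl ⟨⟨hs, has⟩, ⟨ht, hat⟩, hst⟩))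

lemma card_unitPairs_le_subfamilies (a : α) :
    #(unitPairs 𝒜) ≤ #(unitPairs (𝒜.nonMemberSubfamily a)) + #(unitPairs (𝒜.memberSubfamily a)) +
      2 * #(𝒜.memberSubfamily a ∩ 𝒜.nonMemberSubfamily a) := by
  refine (card_le_card (unitPairs_subset_subfamilies a)).trans ?_
  refine (card_union_le _ _).trans ?_
  grw [card_union_le, card_union_le, card_image_le, card_image_le, card_image_le]
  omega

theorem card_unitPairs_le (𝒜 : Finset (Finset α)) : #(unitPairs 𝒜) ≤ 2 * 𝒜.vcDim * #𝒜 := by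
  suffices ∀ U : Finset α, ∀ 𝒜 : Finset (Finset α), (∀ s ∈ 𝒜, s ⊆ U) →
      #(unitPairs 𝒜) ≤ 2 * 𝒜.vcDim * #𝒜 from this _ 𝒜 fun s ↦ le_sup (f := id)
  intro U
  induction U using Finset.induction_on with
  | empty =>
    intro 𝒜 h𝒜
    suffices unitPairs 𝒜 = ∅ by simp [this]
    refine eq_empty_of_forall_notMem fun p hp ↦ ?_
    obtain ⟨h₁, h₂, h⟩ := mem_unitPairs.1 hp
    rw [subset_empty.1 (h𝒜 _ h₁), subset_empty.1 (h𝒜 _ h₂)] at h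
    simp at h
  | insert a U _ ih =>
    intro 𝒜 h𝒜
    set ℳ := 𝒜.memberSubfamily a
    set 𝒩 := 𝒜.nonMemberSubfamily a
    have hU : ∀ s ∈ ℳ ∪ 𝒩, s ⊆ U := by
      rw [memberSubfamily_union_nonMemberSubfamily]
      intro s hs
      obtain ⟨v, hv, rfl⟩ := mem_image.1 hs
      exact (erase_subset_erase a (h𝒜 v hv)).trans (erase_insert_subset a U)
    have ih_union := ih (ℳ ∪ 𝒩) hU
    have ih_inter := ih (ℳ ∩ 𝒩) fun s hs ↦ hU s (inter_subset_union hs)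
    have hvc_union : (ℳ ∪ 𝒩).vcDim ≤ 𝒜.vcDim := by
      rw [memberSubfamily_union_nonMemberSubfamily]
      exact vcDim_image_erase_le a 𝒜
    have hvc_inter :
        2 * (ℳ ∩ 𝒩).vcDim * #(ℳ ∩ 𝒩) + 2 * #(ℳ ∩ 𝒩) ≤ 2 * 𝒜.vcDim * #(ℳ ∩ 𝒩) := by
      rcases (ℳ ∩ 𝒩).eq_empty_or_nonempty with h | h
      · simp [h]
      · have := vcDim_memberSubfamily_inter_add_one_le h
        nlinarith
    calc #(unitPairs 𝒜) ≤ #(unitPairs 𝒩) + #(unitPairs ℳ) + 2 * #(ℳ ∩ 𝒩) :=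
          card_unitPairs_le_subfamilies a
      _ ≤ #(unitPairs (ℳ ∪ 𝒩)) + #(unitPairs (ℳ ∩ 𝒩)) + 2 * #(ℳ ∩ 𝒩) := by
          grw [← card_unitPairs_add_card_unitPairs_le, add_comm #(unitPairs 𝒩)]
      _ ≤ 2 * 𝒜.vcDim * (#(ℳ ∪ 𝒩) + #(ℳ ∩ 𝒩)) := by
          grw [ih_union, ih_inter, hvc_union]
          linarith
      _ = 2 * 𝒜.vcDim * #𝒜 := by
          rw [card_union_add_card_inter, card_memberSubfamily_add_card_nonMemberSubfamily]

lemma sum_min_le_of_card_filter_le {β : Type*} (E : Finset (β × β)) (A : Finset β) (w : β → ℕ)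
    (D : ℕ) (h : ∀ k, #{p ∈ E | k < w p.1 ∧ k < w p.2} ≤ D * #{x ∈ A | k < w x}) :
    ∑ p ∈ E, min (w p.1) (w p.2) ≤ D * ∑ x ∈ A, w x := by
  set N := ∑ p ∈ E, w p.1
  have hmin : ∀ p ∈ E, min (w p.1) (w p.2) = #{k ∈ range N | k < w p.1 ∧ k < w p.2} := by
    intro p hp
    have : w p.1 ≤ N := single_le_sum (f := fun p ↦ w p.1) (fun _ _ ↦ Nat.zero_le _) hp
    rw [← card_range (min _ _)]
    congr 1
    ext k
    simp only [mem_range, mem_filter]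
    omega
  have hw : ∀ x, #{k ∈ range N | k < w x} ≤ w x := fun x ↦
    (card_le_card fun k hk ↦ mem_range.2 (mem_filter.1 hk).2).trans (card_range _).le
  calc ∑ p ∈ E, min (w p.1) (w p.2) = ∑ p ∈ E, #{k ∈ range N | k < w p.1 ∧ k < w p.2} :=
        sum_congr rfl hmin
    _ = ∑ k ∈ range N, #{p ∈ E | k < w p.1 ∧ k < w p.2} :=
        sum_card_bipartiteAbove_eq_sum_card_bipartiteBelow _
    _ ≤ ∑ k ∈ range N, D * #{x ∈ A | k < w x} := sum_le_sum fun k _ ↦ h k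
    _ = D * ∑ x ∈ A, #{k ∈ range N | k < w x} := by
        rw [← mul_sum]
        exact congrArg _ (sum_card_bipartiteAbove_eq_sum_card_bipartiteBelow _).symm
    _ ≤ D * ∑ x ∈ A, w x := by gcongr with x; exact hw x

lemma sum_sum_card_symmDiff (C : Finset (Finset α)) (Y : Finset α)
    (hY : ∀ A ∈ C, ∀ B ∈ C, A ∆ B ⊆ Y) :
    ∑ A ∈ C, ∑ B ∈ C, #(A ∆ B) = 2 * ∑ a ∈ Y, #{A ∈ C | a ∈ A} * #{A ∈ C | a ∉ A} := by
  have hpoint : ∀ A ∈ C, ∀ B ∈ C, #(A ∆ B) = ∑ a ∈ Y,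
      ((if a ∈ A then 1 else 0) * (if a ∉ B then 1 else 0) +
        (if a ∉ A then 1 else 0) * (if a ∈ B then 1 else 0)) := by
    intro A hA B hB
    rw [← inter_eq_right.2 (hY A hA B hB), ← filter_mem_eq_inter, card_filter]
    refine sum_congr rfl fun a _ ↦ ?_
    by_cases a ∈ A <;> by_cases a ∈ B <;> simp [mem_symmDiff, *]
  rw [sum_congr rfl fun A hA ↦ sum_congr rfl (hpoint A hA)]
  rw [sum_congr rfl fun A _ ↦ sum_comm, sum_comm, mul_sum]
  refine sum_congr rfl fun a _ ↦ ?_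
  simp only [sum_add_distrib, ← sum_mul_sum, card_filter]
  ring

lemma mul_card_sub_one_le_of_separated (C : Finset (Finset α)) (Y : Finset α) {δ : ℕ}
    (hsep : ∀ A ∈ C, ∀ B ∈ C, A ≠ B → δ ≤ #(A ∆ B)) (hY : ∀ A ∈ C, ∀ B ∈ C, A ∆ B ⊆ Y) :
    δ * (#C - 1) ≤ 2 * ∑ a ∈ Y, min #{A ∈ C | a ∈ A} #{A ∈ C | a ∉ A} := by
  rcases C.eq_empty_or_nonempty with rfl | hC
  · simp
  have hprod : ∀ x y, x ≤ #C → y ≤ #C → x * y ≤ #C * min x y := by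
    intro x y hx hy
    rcases le_total x y with h | h <;> simp only [h, min_eq_left, min_eq_right] <;> nlinarith
  refine Nat.le_of_mul_le_mul_left ?_ hC.card_pos
  calc #C * (δ * (#C - 1)) = ∑ A ∈ C, ∑ B ∈ C.erase A, δ := by
        simp only [sum_const, smul_eq_mul]
        rw [sum_congr rfl fun A hA ↦ by rw [card_erase_of_mem hA], sum_const, smul_eq_mul]
        ring
    _ ≤ ∑ A ∈ C, ∑ B ∈ C.erase A, #(A ∆ B) :=
        sum_le_sum fun A hA ↦ sum_le_sum fun B hB ↦
          hsep A hA B (mem_of_mem_erase hB) (ne_of_mem_erase hB).symm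
    _ ≤ ∑ A ∈ C, ∑ B ∈ C, #(A ∆ B) := sum_le_sum fun A _ ↦ sum_le_sum_of_subset (erase_subset _ _)
    _ = 2 * ∑ a ∈ Y, #{A ∈ C | a ∈ A} * #{A ∈ C | a ∉ A} := sum_sum_card_symmDiff C Y hY
    _ ≤ 2 * ∑ a ∈ Y, #C * min #{A ∈ C | a ∈ A} #{A ∈ C | a ∉ A} :=
        Nat.mul_le_mul_left 2 <| sum_le_sum fun a _ ↦
          hprod _ _ (card_filter_le C (a ∈ ·)) (card_filter_le C (a ∉ ·))
    _ = #C * (2 * ∑ a ∈ Y, min #{A ∈ C | a ∈ A} #{A ∈ C | a ∉ A}) := by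
        rw [← mul_sum]; ring

lemma sum_sum_powerset_erase_le_sum_unitPairs (S : Finset α) (g : Finset α × Finset α → ℕ) :
    ∑ a ∈ S, ∑ t ∈ (S.erase a).powerset, g (insert a t, t) ≤ ∑ p ∈ unitPairs S.powerset, g p := by
  rw [sum_sigma']
  have hnot : ∀ x ∈ S.sigma fun a ↦ (S.erase a).powerset, x.1 ∉ x.2 := by
    intro x hx
    exact fun h ↦ notMem_erase x.1 S (mem_powerset.1 (mem_sigma.1 hx).2 h)
  have hinj : Set.InjOn (fun x : (_ : α) × Finset α ↦ (insert x.1 x.2, x.2))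
      (S.sigma fun a ↦ (S.erase a).powerset) := by
    rintro ⟨a, t⟩ hat ⟨b, u⟩ - h
    simp only [Prod.mk.injEq] at h
    obtain ⟨h, rfl⟩ := h
    have : a = b := by
      have := h ▸ mem_insert_self a t
      exact (mem_insert.1 this).resolve_right (hnot _ hat)
    subst this
    rfl
  rw [← sum_image hinj]
  refine sum_le_sum_of_subset fun p hp ↦ ?_
  obtain ⟨⟨a, t⟩, hat, rfl⟩ := mem_image.1 hp
  obtain ⟨ha, ht⟩ := mem_sigma.1 hat
  have htS := (mem_powerset.1 ht).trans (erase_subset a S)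
  refine mem_unitPairs.2 ⟨mem_powerset.2 (insert_subset ha htS), mem_powerset.2 htS, ?_⟩
  rw [insert_symmDiff_self (hnot _ hat), card_singleton]

lemma sum_powersetCard_sum_compl [Fintype α] {M : Type*} [AddCommMonoid M] (r : ℕ)
    (g : Finset α → α → M) :
    ∑ S ∈ powersetCard r univ, ∑ a ∈ Sᶜ, g (insert a S) a =
      ∑ S ∈ powersetCard (r + 1) univ, ∑ a ∈ S, g S a := by
  rw [sum_sigma', sum_sigma']
  refine sum_nbij' (fun x ↦ ⟨insert x.2 x.1, x.2⟩) (fun x ↦ ⟨x.1.erase x.2, x.2⟩) ?_ ?_ ?_ ?_ ?_ <;>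
    rintro ⟨S, a⟩ h <;> simp only [mem_sigma, mem_powersetCard_univ, mem_compl] at h
  · simp [mem_sigma, card_insert_of_notMem h.2, h.1]
  · simp [mem_sigma, card_erase_of_mem h.2, h.1]
  · simp [erase_insert h.2]
  · simp [insert_erase h.2]
  · rfl

section Trace
variable (F : Finset (Finset α))

def traceCount (S t : Finset α) : ℕ := #{A ∈ F | A ∩ S = t}

lemma sum_traceCount (S : Finset α) : ∑ t ∈ S.powerset, traceCount F S t = #F :=
  (card_eq_sum_card_fiberwise fun _ _ ↦ mem_powerset.2 inter_subset_right).symm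

lemma mem_image_inter_of_traceCount_pos {S t : Finset α} (h : 0 < traceCount F S t) :
    t ∈ F.image (· ∩ S) := by
  obtain ⟨A, hA⟩ := card_pos.1 h
  exact mem_image.2 ⟨A, mem_filter.1 hA⟩

lemma vcDim_image_inter_le (S : Finset α) : (F.image (· ∩ S)).vcDim ≤ F.vcDim := by
  refine vcDim_le_vcDim_of_shatters fun s hs t ht ↦ ?_
  have hsS : s ⊆ S := by
    obtain ⟨u, hu, hsu⟩ := hs.exists_superset
    obtain ⟨A, -, rfl⟩ := mem_image.1 hu
    exact hsu.trans inter_subset_right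
  obtain ⟨u, hu, rfl⟩ := hs ht
  obtain ⟨A, hA, rfl⟩ := mem_image.1 hu
  exact ⟨A, hA, by rw [inter_comm A, ← inter_assoc, inter_eq_left.2 hsS]⟩

theorem sum_unitPairs_min_traceCount_le (S : Finset α) :
    ∑ p ∈ unitPairs S.powerset, min (traceCount F S p.1) (traceCount F S p.2) ≤
      2 * F.vcDim * #F := by
  rw [← sum_traceCount F S]
  refine sum_min_le_of_card_filter_le _ _ _ _ fun k ↦ ?_
  rw [← unitPairs_filter (k < traceCount F S ·)]
  have hlevel : {t ∈ S.powerset | k < traceCount F S t} ⊆ F.image (· ∩ S) := fun t ht ↦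
    mem_image_inter_of_traceCount_pos F (Nat.zero_lt_of_lt (mem_filter.1 ht).2)
  grw [card_unitPairs_le, vcDim_mono hlevel, vcDim_image_inter_le]

/-- Total weight of the edges of the unit-distance graph of the traces on `S` in direction `a`,
an edge weighing the smaller multiplicity of its two endpoints. -/
def crossWeight (S : Finset α) (a : α) : ℕ :=
  ∑ t ∈ (S.erase a).powerset, min (traceCount F S (insert a t)) (traceCount F S t)

lemma sum_crossWeight_le (S : Finset α) : ∑ a ∈ S, crossWeight F S a ≤ 2 * F.vcDim * #F :=
  (sum_sum_powerset_erase_le_sum_unitPairs S fun p ↦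
    min (traceCount F S p.1) (traceCount F S p.2)).trans (sum_unitPairs_min_traceCount_le F S)

lemma mul_card_sub_card_image_inter_le [Fintype α] {δ : ℕ}
    (hsep : ∀ A ∈ F, ∀ B ∈ F, A ≠ B → δ ≤ #(A ∆ B)) (S : Finset α) :
    δ * (#F - #(F.image (· ∩ S))) ≤ 2 * ∑ a ∈ Sᶜ, crossWeight F (insert a S) a := by
  set C : Finset α → Finset (Finset α) := fun t ↦ {A ∈ F | A ∩ S = t}
  have hsplit : ∀ t ⊆ S, ∀ a ∈ Sᶜ, min #{A ∈ C t | a ∈ A} #{A ∈ C t | a ∉ A} =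
      min (traceCount F (insert a S) (insert a t)) (traceCount F (insert a S) t) := by
    intro t htS a ha
    have haS := mem_compl.1 ha
    simp only [C, traceCount, filter_filter, inter_insert_eq_insert_iff haS htS,
      inter_insert_eq_iff haS htS]
  have hclass : ∀ t ∈ F.image (· ∩ S), δ * (#(C t) - 1) ≤
      2 * ∑ a ∈ Sᶜ, min (traceCount F (insert a S) (insert a t)) (traceCount F (insert a S) t) := by
    intro t ht
    have htS : t ⊆ S := by
      obtain ⟨A, -, rfl⟩ := mem_image.1 ht
      exact inter_subset_right
    rw [← sum_congr rfl (hsplit t htS)]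
    exact mul_card_sub_one_le_of_separated _ _
      (fun A hA B hB ↦ hsep A (mem_filter.1 hA).1 B (mem_filter.1 hB).1)
      fun A hA B hB ↦ symmDiff_subset_compl_of_inter_eq
        ((mem_filter.1 hA).2.trans (mem_filter.1 hB).2.symm)
  calc δ * (#F - #(F.image (· ∩ S))) = ∑ t ∈ F.image (· ∩ S), δ * (#(C t) - 1) := by
        rw [card_sub_card_image_eq_sum, mul_sum]
    _ ≤ ∑ t ∈ F.image (· ∩ S), 2 * ∑ a ∈ Sᶜ,
          min (traceCount F (insert a S) (insert a t)) (traceCount F (insert a S) t) :=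
        sum_le_sum hclass
    _ ≤ ∑ t ∈ S.powerset, 2 * ∑ a ∈ Sᶜ,
          min (traceCount F (insert a S) (insert a t)) (traceCount F (insert a S) t) :=
        sum_le_sum_of_subset fun t ht ↦ by
          obtain ⟨A, -, rfl⟩ := mem_image.1 ht
          exact mem_powerset.2 inter_subset_right
    _ = 2 * ∑ a ∈ Sᶜ, crossWeight F (insert a S) a := by
        rw [← mul_sum, sum_comm]
        refine congrArg _ (sum_congr rfl fun a ha ↦ ?_)
        rw [crossWeight, erase_insert (mem_compl.1 ha)]

theorem separated_mul_card_sub_le [Fintype α] {δ r K : ℕ}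
    (hsep : ∀ A ∈ F, ∀ B ∈ F, A ≠ B → δ ≤ #(A ∆ B))
    (hr : r ≤ Fintype.card α) (hK : ∀ S : Finset α, #S = r → #(F.image (· ∩ S)) ≤ K) :
    δ * (r + 1) * (#F - K) ≤ 4 * F.vcDim * (Fintype.card α - r) * #F := by
  set n := Fintype.card α
  have hsum : n.choose r * (δ * (#F - K)) ≤ 4 * F.vcDim * #F * n.choose (r + 1) :=
    calc n.choose r * (δ * (#F - K)) = ∑ _S ∈ powersetCard r (univ : Finset α), δ * (#F - K) := by
          rw [sum_const, card_powersetCard, card_univ, smul_eq_mul]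
      _ ≤ ∑ S ∈ powersetCard r univ, δ * (#F - #(F.image (· ∩ S))) := by
          gcongr with S hS
          exact hK S (mem_powersetCard_univ.1 hS)
      _ ≤ ∑ S ∈ powersetCard r univ, 2 * ∑ a ∈ Sᶜ, crossWeight F (insert a S) a :=
          sum_le_sum fun S _ ↦ mul_card_sub_card_image_inter_le F hsep S
      _ = 2 * ∑ S ∈ powersetCard (r + 1) univ, ∑ a ∈ S, crossWeight F S a := by
          rw [← mul_sum, sum_powersetCard_sum_compl]
      _ ≤ 2 * ∑ _S ∈ powersetCard (r + 1) (univ : Finset α), 2 * F.vcDim * #F := by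
          gcongr with S
          exact sum_crossWeight_le F S
      _ = 4 * F.vcDim * #F * n.choose (r + 1) := by
          simp only [sum_const, card_powersetCard, card_univ, smul_eq_mul, n]
          ring
  refine Nat.le_of_mul_le_mul_left ?_ (Nat.choose_pos hr)
  calc n.choose r * (δ * (r + 1) * (#F - K)) = n.choose r * (δ * (#F - K)) * (r + 1) := by ring
    _ ≤ 4 * F.vcDim * #F * n.choose (r + 1) * (r + 1) := Nat.mul_le_mul_right _ hsum
    _ = n.choose r * (4 * F.vcDim * (n - r) * #F) := by
        rw [mul_assoc _ (n.choose _), Nat.choose_succ_right_eq]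
        ring

theorem separated_card_le_two_mul [Fintype α] {δ r K : ℕ}
    (hsep : ∀ A ∈ F, ∀ B ∈ F, A ≠ B → δ ≤ #(A ∆ B)) (hδ : 0 < δ) (hr : r ≤ Fintype.card α)
    (hK : ∀ S : Finset α, #S = r → #(F.image (· ∩ S)) ≤ K)
    (hrδ : 8 * F.vcDim * (Fintype.card α - r) ≤ δ * (r + 1)) : #F ≤ 2 * K := by
  have h : δ * (r + 1) * (2 * (#F - K)) ≤ δ * (r + 1) * #F :=
    calc δ * (r + 1) * (2 * (#F - K)) = 2 * (δ * (r + 1) * (#F - K)) := by ring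
      _ ≤ 2 * (4 * F.vcDim * (Fintype.card α - r) * #F) := by
          grw [separated_mul_card_sub_le F hsep hr hK]
      _ = 8 * F.vcDim * (Fintype.card α - r) * #F := by ring
      _ ≤ δ * (r + 1) * #F := by grw [hrδ]
  have := Nat.le_of_mul_le_mul_left h (by positivity)
  omega

end Trace

end Finset

lemma exists_forall_two_pow_le_imp_le (c d : ℕ) :
    ∃ d₀ : ℕ, 0 < d₀ ∧ ∀ z : ℕ, 2 ^ z ≤ c * z ^ d → z ≤ d₀ := by
  have hlim := tendsto_pow_const_div_const_pow_of_one_lt d (one_lt_two (α := ℝ))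
  obtain ⟨N, hN⟩ := Filter.eventually_atTop.1
    (hlim.eventually_lt_const (inv_pos.2 (Nat.cast_add_one_pos c)))
  refine ⟨N + 1, N.succ_pos, fun z hz ↦ ?_⟩
  by_contra! hzN
  have hlt := hN z (by omega)
  rw [div_lt_iff₀ (by positivity), ← div_eq_inv_mul, lt_div_iff₀ (Nat.cast_add_one_pos c)] at hlt
  have : ((2 ^ z : ℕ) : ℝ) ≤ ((c * z ^ d : ℕ) : ℝ) := by exact_mod_cast hz
  push_cast at this
  nlinarith [pow_nonneg (Nat.cast_nonneg (α := ℝ) z) d]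

theorem stmt_5_general (c d : ℕ) (hc : 2 ≤ c) :
    ∃ c1 : ℝ, 0 < c1 ∧ ∀ (n δ : ℕ), 1 ≤ δ → δ ≤ n → ∀ F : Finset (Finset (Fin n)),
      (∀ V0 : Finset (Fin n), 1 ≤ V0.card →
        (F.image (fun A => A ∩ V0)).card ≤ c * V0.card ^ d) →
      (∀ A ∈ F, ∀ B ∈ F, A ≠ B → δ ≤ (symmDiff A B).card) →
      (F.card : ℝ) ≤ c1 * ((n : ℝ) / (δ : ℝ)) ^ d := by
  obtain ⟨d₀, hd₀, hz⟩ := exists_forall_two_pow_le_imp_le c d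
  refine ⟨2 * c * (8 * d₀) ^ d, by positivity, fun n δ hδ hδn F hπ hsep ↦ ?_⟩
  have hvc : F.vcDim ≤ d₀ := vcDim_le_of_card_image_inter_le hπ hz
  set r := min n (8 * d₀ * n / δ) with hr_def
  have hr₁ : 1 ≤ r := le_min (hδ.trans hδn) ((Nat.one_le_div_iff hδ).2 (by nlinarith))
  have hrδ : 8 * F.vcDim * (n - r) ≤ δ * (r + 1) := by
    rcases min_choice n (8 * d₀ * n / δ) with h | h <;> rw [hr_def, h]
    · simp
    · calc 8 * F.vcDim * (n - 8 * d₀ * n / δ) ≤ 8 * d₀ * n := by gcongr; omega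
        _ ≤ δ * (8 * d₀ * n / δ + 1) := (Nat.lt_mul_div_succ _ hδ).le
  have hF : #F ≤ 2 * (c * r ^ d) :=
    separated_card_le_two_mul (r := r) F hsep hδ (by simp [r])
      (fun S hS ↦ by simpa [hS] using hπ S (by omega)) (by rwa [Fintype.card_fin])
  have hr : (r : ℝ) ≤ 8 * d₀ * (n / δ) :=
    calc (r : ℝ) ≤ ((8 * d₀ * n / δ : ℕ) : ℝ) := by exact_mod_cast min_le_right _ _
      _ ≤ ((8 * d₀ * n : ℕ) : ℝ) / δ := Nat.cast_div_le
      _ = 8 * d₀ * (n / δ) := by push_cast; ring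
  calc (#F : ℝ) ≤ 2 * c * r ^ d := by exact_mod_cast (by linarith : #F ≤ 2 * c * r ^ d)
    _ ≤ 2 * c * (8 * d₀ * (n / δ)) ^ d := by gcongr
    _ = 2 * c * (8 * d₀) ^ d * (n / δ) ^ d := by ring

/-- Haussler's packing lemma: a `δ`-separated family with primal shatter function
at most `c z ^ d` has at most `c₁ (n/δ) ^ d` members. -/
theorem stmt_5 (c d : ℕ) (hc : 2 ≤ c) (hd : 2 ≤ d) :
    ∃ c1 : ℝ, 0 < c1 ∧ ∀ (n δ : ℕ), 1 ≤ δ → δ ≤ n → ∀ F : Finset (Finset (Fin n)),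
      (∀ V0 : Finset (Fin n), 1 ≤ V0.card →
        (F.image (fun A => A ∩ V0)).card ≤ c * V0.card ^ d) →
      (∀ A ∈ F, ∀ B ∈ F, A ≠ B → δ ≤ (symmDiff A B).card) →
      (F.card : ℝ) ≤ c1 * ((n : ℝ) / (δ : ℝ)) ^ d :=
  stmt_5_general c d hc
end

section
/- Let $w : \mathbb{N} \times \mathbb{N} \to \mathbb{R}_{\geq 1}$ satisfy $w(n, p) \leq n^{6n} \cdot w(\lceil p/2 \rceil, \lceil p/2 \rceil)^2$ for all $n \geq 2$ and $p \geq 2$, and $w(n, 1) \leq n^{6n}$ and $w(1, p) \leq 2$. Then there is an absolute constant $C$ such that $w(n, 2n) \leq 2^{C n \log^2 n}$ for all $n \geq 2$. -/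
/-!
On the diagonal, for `n ≤ 2^k` one step of the recurrence gives
`w(n,n) ≤ 2^(6kn) · w(m,m)^2` with `m = ⌈n/2⌉ ≤ 2^(k-1)`, and the bound
`w(n,n) ≤ 2^(2^k (6k² + 1))` is preserved by it, since
`6k 2^k + 2 · 2^(k-1) (6(k-1)² + 1) ≤ 2^k (6k² + 1)`.
A last step from `w(n,n)` to `w(n,2n)`, with `k = ⌊log₂ n⌋ + 1` so that `2^k ≤ 2n`,
gives an exponent of order `n k² ≤ 4 n log² n`.
-/

lemma natCast_pow_le_two_pow {n a : ℕ} (h : n ≤ 2 ^ a) (b : ℕ) :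
    (n : ℝ) ^ b ≤ 2 ^ (a * b) := by
  rw [pow_mul]
  exact_mod_cast Nat.pow_le_pow_left h b

section Recurrence

variable {w : ℕ → ℕ → ℝ} (hw1 : ∀ n p, 1 ≤ w n p)
  (hrec : ∀ n p : ℕ, 2 ≤ n → 2 ≤ p →
    w n p ≤ (n : ℝ) ^ (6 * n) * (w ((p + 1) / 2) ((p + 1) / 2)) ^ 2)

include hw1 hrec in
lemma le_two_pow_of_halving {n p a e : ℕ} (hn : 2 ≤ n) (hp : 2 ≤ p) (ha : n ≤ 2 ^ a)
    (he : w ((p + 1) / 2) ((p + 1) / 2) ≤ 2 ^ e) :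
    w n p ≤ 2 ^ (6 * a * n + 2 * e) := by
  have hsq : w ((p + 1) / 2) ((p + 1) / 2) ^ 2 ≤ ((2 : ℝ) ^ e) ^ 2 :=
    pow_le_pow_left₀ (zero_le_one.trans (hw1 _ _)) he 2
  calc w n p ≤ (n : ℝ) ^ (6 * n) * w ((p + 1) / 2) ((p + 1) / 2) ^ 2 := hrec n p hn hp
    _ ≤ 2 ^ (a * (6 * n)) * ((2 : ℝ) ^ e) ^ 2 := by
        gcongr
        exact natCast_pow_le_two_pow ha _
    _ = 2 ^ (6 * a * n + 2 * e) := by rw [← pow_mul, ← pow_add]; ring_nf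

include hw1 hrec in
lemma diag_le_two_pow (hbase2 : ∀ p : ℕ, w 1 p ≤ 2) (k : ℕ) {n : ℕ} (hn1 : 1 ≤ n)
    (hn : n ≤ 2 ^ k) : w n n ≤ 2 ^ (2 ^ k * (6 * k ^ 2 + 1)) := by
  induction k generalizing n with
  | zero =>
    obtain rfl : n = 1 := by simp at hn; omega
    simpa using hbase2 1
  | succ k ih =>
    obtain rfl | hn2 := hn1.eq_or_lt
    · exact (hbase2 1).trans (le_self_pow₀ one_le_two (by positivity))
    have hm := ih (n := (n + 1) / 2) (by omega) (by rw [pow_succ] at hn; omega)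
    refine (le_two_pow_of_halving hw1 hrec hn2 hn2 hn hm).trans
      (pow_le_pow_right₀ one_le_two ?_)
    have hn' : 6 * (k + 1) * n ≤ 6 * (k + 1) * 2 ^ (k + 1) := by gcongr
    rw [pow_succ 2 k] at hn' ⊢
    nlinarith

include hw1 hrec in
lemma le_two_pow_mul_log_sq (hbase2 : ∀ p : ℕ, w 1 p ≤ 2) {n : ℕ} (hn : 2 ≤ n) :
    w n (2 * n) ≤ 2 ^ (112 * n * Nat.log 2 n ^ 2) := by
  set k := Nat.log 2 n
  have hk : 1 ≤ k := Nat.log_pos one_lt_two hn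
  have hlow : 2 ^ k ≤ n := Nat.pow_log_le_self 2 (by omega)
  have hup : n ≤ 2 ^ (k + 1) := (Nat.lt_pow_succ_log_self one_lt_two n).le
  have hdiag : w ((2 * n + 1) / 2) ((2 * n + 1) / 2) ≤
      2 ^ (2 ^ (k + 1) * (6 * (k + 1) ^ 2 + 1)) := by
    rw [show (2 * n + 1) / 2 = n by omega]
    exact diag_le_two_pow hw1 hrec hbase2 (k + 1) (by omega) hup
  refine (le_two_pow_of_halving hw1 hrec hn (by omega) hup hdiag).trans
    (pow_le_pow_right₀ one_le_two ?_)
  have hpow : 2 ^ (k + 1) ≤ 2 * n := by rw [pow_succ]; omega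
  calc 6 * (k + 1) * n + 2 * (2 ^ (k + 1) * (6 * (k + 1) ^ 2 + 1))
      ≤ 6 * (k + 1) * n + 2 * (2 * n * (6 * (k + 1) ^ 2 + 1)) := by gcongr
    _ = n * (24 * k ^ 2 + 54 * k + 34) := by ring
    _ ≤ n * (112 * k ^ 2) := by gcongr; nlinarith
    _ = 112 * n * k ^ 2 := by ring

end Recurrence

theorem stmt_7_general (w : ℕ → ℕ → ℝ) (hw1 : ∀ n p, 1 ≤ w n p)
    (hrec : ∀ n p : ℕ, 2 ≤ n → 2 ≤ p →
      w n p ≤ (n : ℝ) ^ (6 * n) * (w ((p + 1) / 2) ((p + 1) / 2)) ^ 2)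
    (hbase2 : ∀ p : ℕ, w 1 p ≤ 2) :
    ∃ C : ℝ, 0 < C ∧ ∀ n : ℕ, 2 ≤ n →
      w n (2 * n) ≤ (2 : ℝ) ^ (C * (n : ℝ) * (Real.logb 2 n) ^ 2) := by
  refine ⟨112, by norm_num, fun n hn => ?_⟩
  calc w n (2 * n) ≤ 2 ^ (112 * n * Nat.log 2 n ^ 2) := le_two_pow_mul_log_sq hw1 hrec hbase2 hn
    _ = (2 : ℝ) ^ ((112 * n * Nat.log 2 n ^ 2 : ℕ) : ℝ) := (Real.rpow_natCast _ _).symm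
    _ ≤ (2 : ℝ) ^ (112 * (n : ℝ) * (Real.logb 2 n) ^ 2) := by
        refine Real.rpow_le_rpow_of_exponent_le one_le_two ?_
        push_cast
        gcongr
        exact Real.natLog_le_logb n 2

/-- Solving the recurrence `w(n,p) ≤ n^{6n} w(⌈p/2⌉,⌈p/2⌉)²` gives
`w(n,2n) ≤ 2^{C n log² n}`. -/
theorem stmt_7 (w : ℕ → ℕ → ℝ) (hw1 : ∀ n p, 1 ≤ w n p)
    (hrec : ∀ n p : ℕ, 2 ≤ n → 2 ≤ p →
      w n p ≤ (n : ℝ) ^ (6 * n) * (w ((p + 1) / 2) ((p + 1) / 2)) ^ 2)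
    (hbase1 : ∀ n : ℕ, w n 1 ≤ (n : ℝ) ^ (6 * n))
    (hbase2 : ∀ p : ℕ, w 1 p ≤ 2) :
    ∃ C : ℝ, 0 < C ∧ ∀ n : ℕ, 2 ≤ n →
      w n (2 * n) ≤ (2 : ℝ) ^ (C * (n : ℝ) * (Real.logb 2 n) ^ 2) :=
  stmt_7_general w hw1 hrec hbase2
end

section
/- Let $k \geq 1$ and let $g : \mathbb{N} \times \mathbb{N} \to \mathbb{R}_{\geq 1}$ satisfy $g(n, p) \leq n^{8n + 2kp} \cdot g(\lceil p/2 \rceil, \lceil p/2 \rceil)^2$ for all $n, p \geq 2$, with $g(n,1), g(1,p) \leq n^{8n+2kp}$. Then there is an absolute constant $C$ such that $g(n, 2n) \leq 2^{C k n \log^2 n}$ for all $n \geq 2$. -/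
/-!
Put `c = ⌈log₂ p⌉`. The factor `p^(8p + 2kp)` is at most `2^(10kpc)`, and halving `p` lowers `c` by
one, so by strong induction `g(p, p) ≤ 2^(20kpc²)`: the squared term contributes
`2 · 20k⌈p/2⌉(c-1)² ≤ 20k(p+1)(c-1)²`, and `10kpc` covers the difference to `20kpc²`. One more step
of the recurrence from `(n, 2n)` lands on the diagonal `(n, n)`, and `c ≤ 2 log₂ n` for `n ≥ 2`.
-/

open Nat

lemma Nat.clog_two_add_one_div_two {p : ℕ} (hp : 2 ≤ p) :
    clog 2 ((p + 1) / 2) + 1 = clog 2 p := by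
  rw [clog_of_two_le one_lt_two hp]
  rfl

lemma Nat.clog_two_le_self (n : ℕ) : clog 2 n ≤ n :=
  clog_le_of_le_pow Nat.lt_two_pow_self.le

lemma natCast_pow_le_two_pow_clog_mul (n m : ℕ) : (n : ℝ) ^ m ≤ 2 ^ (clog 2 n * m) := by
  rw [pow_mul]
  gcongr
  exact_mod_cast le_pow_clog one_lt_two n

lemma natCast_pow_le_two_pow_mul_clog {k : ℕ} (hk : 1 ≤ k) (n p : ℕ) :
    (n : ℝ) ^ (8 * n + 2 * k * p) ≤ 2 ^ (k * (8 * n + 2 * p) * clog 2 n) := by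
  refine (natCast_pow_le_two_pow_clog_mul n _).trans (pow_le_pow_right₀ one_le_two ?_)
  have := Nat.mul_le_mul_left (clog 2 n * n) hk
  nlinarith

lemma natCast_clog_two_le_two_mul_logb {n : ℕ} (hn : 2 ≤ n) :
    (clog 2 n : ℝ) ≤ 2 * Real.logb 2 n := by
  have hlogb : 1 ≤ Real.logb 2 n := by
    rw [Real.le_logb_iff_rpow_le one_lt_two (by positivity), Real.rpow_one]
    exact_mod_cast hn
  have hceil := Real.natCeil_logb_natCast 2 n
  rw [Nat.cast_ofNat] at hceil
  have hlt : (clog 2 n : ℝ) < Real.logb 2 n + 1 := by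
    rw [← hceil]
    exact Nat.ceil_lt_add_one (by linarith)
  linarith

lemma two_pow_mul_clog_sq_le {n : ℕ} (hn : 2 ≤ n) (m : ℕ) :
    (2 : ℝ) ^ (m * clog 2 n ^ 2) ≤ (2 : ℝ) ^ (4 * (m : ℝ) * Real.logb 2 n ^ 2) := by
  rw [← Real.rpow_natCast]
  apply Real.rpow_le_rpow_of_exponent_le one_le_two
  have hsq := pow_le_pow_left₀ (Nat.cast_nonneg _) (natCast_clog_two_le_two_mul_logb hn) 2
  push_cast
  nlinarith [mul_le_mul_of_nonneg_left hsq (Nat.cast_nonneg m : (0 : ℝ) ≤ m)]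

theorem le_two_pow_of_le_two_pow_mul_sq_half (a : ℕ) (f : ℕ → ℝ) (hf0 : ∀ p, 0 ≤ f p)
    (hf1 : f 1 ≤ 1) (hrec : ∀ p, 2 ≤ p → f p ≤ 2 ^ (a * p * clog 2 p) * f ((p + 1) / 2) ^ 2) :
    ∀ p, 1 ≤ p → f p ≤ 2 ^ (2 * a * p * clog 2 p ^ 2) := by
  intro p
  induction p using Nat.strong_induction_on with
  | _ p ih =>
    intro hp
    obtain rfl | hp2 : p = 1 ∨ 2 ≤ p := by omega
    · simpa using hf1
    set q := (p + 1) / 2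
    set d := clog 2 q
    have hc : clog 2 p = d + 1 := (Nat.clog_two_add_one_div_two hp2).symm
    have hfq : f q ^ 2 ≤ 2 ^ (4 * a * q * d ^ 2) := by
      calc f q ^ 2 ≤ (2 ^ (2 * a * q * d ^ 2)) ^ 2 :=
            pow_le_pow_left₀ (hf0 q) (ih q (by omega) (by omega)) 2
        _ = 2 ^ (4 * a * q * d ^ 2) := by rw [← pow_mul]; ring_nf
    have hexp : a * p * (d + 1) + 4 * a * q * d ^ 2 ≤ 2 * a * p * (d + 1) ^ 2 := by
      have h2q : 2 * q ≤ p + 1 := by omega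
      have hdp : d ≤ p := (Nat.clog_two_le_self q).trans (by omega)
      have : p * (d + 1) + 4 * q * d ^ 2 ≤ 2 * p * (d + 1) ^ 2 := by nlinarith
      calc a * p * (d + 1) + 4 * a * q * d ^ 2 = a * (p * (d + 1) + 4 * q * d ^ 2) := by ring
        _ ≤ a * (2 * p * (d + 1) ^ 2) := Nat.mul_le_mul_left a this
        _ = 2 * a * p * (d + 1) ^ 2 := by ring
    calc f p ≤ 2 ^ (a * p * (d + 1)) * f q ^ 2 := hc ▸ hrec p hp2
      _ ≤ 2 ^ (a * p * (d + 1)) * 2 ^ (4 * a * q * d ^ 2) := by gcongr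
      _ ≤ 2 ^ (2 * a * p * clog 2 p ^ 2) := by
        rw [← pow_add, hc]
        exact pow_le_pow_right₀ one_le_two hexp

theorem stmt_8_general (k : ℕ) (hk : 1 ≤ k) (g : ℕ → ℕ → ℝ) (hg1 : ∀ n p, 1 ≤ g n p)
    (hrec : ∀ n p : ℕ, 2 ≤ n → 2 ≤ p →
      g n p ≤ (n : ℝ) ^ (8 * n + 2 * k * p) * (g ((p + 1) / 2) ((p + 1) / 2)) ^ 2)
    (hbase2 : ∀ p : ℕ, g 1 p ≤ (1 : ℝ) ^ (8 + 2 * k * p)) :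
    ∃ C : ℝ, 0 < C ∧ ∀ n : ℕ, 2 ≤ n →
      g n (2 * n) ≤ (2 : ℝ) ^ (C * (k : ℝ) * (n : ℝ) * (Real.logb 2 n) ^ 2) := by
  have hg0 : ∀ n p, 0 ≤ g n p := fun n p => zero_le_one.trans (hg1 n p)
  have hdiag := le_two_pow_of_le_two_pow_mul_sq_half (10 * k) (fun p => g p p)
    (fun p => hg0 p p) (by simpa using hbase2 1) fun p hp => (hrec p p hp hp).trans <| by
      gcongr
      exact (natCast_pow_le_two_pow_mul_clog hk p p).trans_eq (by ring_nf)
  refine ⟨208, by norm_num, fun n hn => ?_⟩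
  have hsq : g n n ^ 2 ≤ 2 ^ (40 * k * n * clog 2 n ^ 2) :=
    (pow_le_pow_left₀ (hg0 n n) (hdiag n (by omega)) 2).trans_eq (by rw [← pow_mul]; ring_nf)
  have hpow : (n : ℝ) ^ (8 * n + 2 * k * (2 * n)) ≤ 2 ^ (12 * k * n * clog 2 n ^ 2) :=
    (natCast_pow_le_two_pow_mul_clog hk n (2 * n)).trans <| pow_le_pow_right₀ one_le_two <|
      (Nat.mul_le_mul_left (12 * k * n) (Nat.le_self_pow two_ne_zero _)).trans_eq' (by ring)
  have hhalf : (2 * n + 1) / 2 = n := by omega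
  calc g n (2 * n) ≤ (n : ℝ) ^ (8 * n + 2 * k * (2 * n)) * g n n ^ 2 := by
        simpa only [hhalf] using hrec n (2 * n) hn (by omega)
    _ ≤ 2 ^ (12 * k * n * clog 2 n ^ 2) * 2 ^ (40 * k * n * clog 2 n ^ 2) := by gcongr
    _ = 2 ^ (52 * k * n * clog 2 n ^ 2) := by rw [← pow_add]; ring_nf
    _ ≤ 2 ^ (4 * ((52 * k * n : ℕ) : ℝ) * Real.logb 2 n ^ 2) := two_pow_mul_clog_sq_le hn _
    _ = 2 ^ (208 * (k : ℝ) * n * Real.logb 2 n ^ 2) := by push_cast; ring_nf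

/-- Solving the recurrence `g(n,p) ≤ n^{8n+2kp} g(⌈p/2⌉,⌈p/2⌉)²` gives
`g(n,2n) ≤ 2^{C k n log² n}`. -/
theorem stmt_8 (k : ℕ) (hk : 1 ≤ k) (g : ℕ → ℕ → ℝ) (hg1 : ∀ n p, 1 ≤ g n p)
    (hrec : ∀ n p : ℕ, 2 ≤ n → 2 ≤ p →
      g n p ≤ (n : ℝ) ^ (8 * n + 2 * k * p) * (g ((p + 1) / 2) ((p + 1) / 2)) ^ 2)
    (hbase1 : ∀ n : ℕ, g n 1 ≤ (n : ℝ) ^ (8 * n + 2 * k))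
    (hbase2 : ∀ p : ℕ, g 1 p ≤ (1 : ℝ) ^ (8 + 2 * k * p)) :
    ∃ C : ℝ, 0 < C ∧ ∀ n : ℕ, 2 ≤ n →
      g n (2 * n) ≤ (2 : ℝ) ^ (C * (k : ℝ) * (n : ℝ) * (Real.logb 2 n) ^ 2) :=
  stmt_8_general k hk g hg1 hrec hbase2
end
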